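/- Let P be a nonzero polynomial over the field F₂ (ZMod 2) with natDegree P = d, let t be a natural number, and set n = d + t + 1. Then the minimum, over all nonzero polynomials K with P ∣ K and natDegree K < n, of the Hamming weight of K equals n minus the maximum, over all nonzero vectors q : Fin (t+1) → F₂, of the number of indices i ∈ Fin n with (M_{P,t} · q) i = 0 (the number of satisfied constraints of the affine system M_{P,t}·x = 0 under the assignment q). -/

import Mathlib

/-- The Toeplitz matrix of a polynomial `P`, of size `(d+t+1) × (t+1)`:
`M(i,j) = coeff P (i - j)` if `j ≤ i`, and `0` otherwise. -/
def toeplitz {R : Type*} [CommRing R] (P : Polynomial R) (d t : ℕ) :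
    Matrix (Fin (d + t + 1)) (Fin (t + 1)) R :=
  fun i j => if (j : ℕ) ≤ (i : ℕ) then P.coeff ((i : ℕ) - (j : ℕ)) else 0

/-!
Column `j` of the Toeplitz matrix holds the coefficients of `P * X ^ j`, so `M_{P,t} q` is the
vector of the first `d + t + 1` coefficients of `P * q(X)`, where `q(X)` is the polynomial with
coefficient vector `q`. As `q` runs over the nonzero vectors, `P * q(X)` runs over the nonzero
multiples of `P` of degree `< d + t + 1`, and the constraints satisfied by `q` are exactly the
zero coefficients of `P * q(X)`. Hence weight and number of satisfied constraints add up to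
`d + t + 1`, and minimising the one maximises the other.
-/

open Polynomial Finset Matrix

theorem Nat.sInf_eq_sub_sSup_image_sub {A : Set ℕ} {n : ℕ} (hA : A.Nonempty)
    (hle : ∀ a ∈ A, a ≤ n) : sInf A = n - sSup ((n - ·) '' A) := by
  have hbdd : BddAbove ((n - ·) '' A) := ⟨n, by rintro _ ⟨a, -, rfl⟩; exact Nat.sub_le n a⟩
  obtain ⟨a, ha, hsup : n - a = _⟩ : sSup ((n - ·) '' A) ∈ (n - ·) '' A :=
    Nat.sSup_mem (hA.image _) hbdd
  have hinf_le : sInf A ≤ a := Nat.sInf_le ha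
  have hle_sup : n - sInf A ≤ sSup ((n - ·) '' A) :=
    le_csSup hbdd ⟨_, Nat.sInf_mem hA, rfl⟩
  have := hle a ha
  have := hle _ (Nat.sInf_mem hA)
  omega

namespace Polynomial

section Semiring

variable {R : Type*} [Semiring R] [DecidableEq R]

theorem card_support_eq_card_filter_coeff_ne_zero {K : R[X]} {n : ℕ}
    (hK : K.natDegree < n) : #K.support = #{i : Fin n | K.coeff i ≠ 0} := by
  symm
  refine card_bij (fun i _ => i.val) (by simp) (fun _ _ _ _ => Fin.ext) ?_
  intro j hj
  exact ⟨⟨j, (le_natDegree_of_mem_supp j hj).trans_lt hK⟩, by simpa using hj, rfl⟩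

theorem card_filter_coeff_eq_zero {K : R[X]} {n : ℕ}
    (hK : K.natDegree < n) : #{i : Fin n | K.coeff i = 0} = n - #K.support := by
  rw [card_support_eq_card_filter_coeff_ne_zero hK]
  refine Nat.eq_sub_of_add_eq ?_
  simpa using card_filter_add_card_filter_not (s := univ) (fun i : Fin n => K.coeff i = 0)

theorem natDegree_mul_ofFn_lt {P : R[X]} {d : ℕ} (hPd : P.natDegree ≤ d) (t : ℕ)
    (v : Fin (t + 1) → R) : (P * ofFn (t + 1) v).natDegree < d + t + 1 := by
  have := ofFn_natDegree_lt (by omega) v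
  exact natDegree_mul_le.trans_lt (by omega)

variable [NoZeroDivisors R]

theorem dvd_and_natDegree_lt_iff {P K : R[X]} (hK : K ≠ 0) (t : ℕ) :
    P ∣ K ∧ K.natDegree < P.natDegree + t + 1 ↔
      ∃ v : Fin (t + 1) → R, K = P * ofFn (t + 1) v := by
  constructor
  · rintro ⟨⟨Q, rfl⟩, hdeg⟩
    obtain ⟨hP, hQ⟩ := mul_ne_zero_iff.mp hK
    rw [natDegree_mul hP hQ] at hdeg
    exact ⟨toFn (t + 1) Q, by rw [ofFn_comp_toFn_eq_id_of_natDegree_lt (by omega)]⟩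
  · rintro ⟨v, rfl⟩
    exact ⟨dvd_mul_right _ _, natDegree_mul_ofFn_lt le_rfl t v⟩

theorem image_mul_ofFn {P : R[X]} (hP : P ≠ 0) (t : ℕ) :
    (fun v => P * ofFn (t + 1) v) '' {v | v ≠ 0} =
      {K | K ≠ 0 ∧ P ∣ K ∧ K.natDegree < P.natDegree + t + 1} := by
  ext K
  constructor
  · rintro ⟨v, hv, rfl⟩
    have hK : P * ofFn (t + 1) v ≠ 0 :=
      mul_ne_zero hP ((LinearMap.map_eq_zero_iff _ (injective_ofFn _)).not.mpr hv)
    exact ⟨hK, (dvd_and_natDegree_lt_iff hK t).mpr ⟨v, rfl⟩⟩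
  · rintro ⟨hK, hmul⟩
    obtain ⟨v, rfl⟩ := (dvd_and_natDegree_lt_iff hK t).mp hmul
    exact ⟨v, fun hv => hK (by simp [hv]), rfl⟩

end Semiring

end Polynomial

section Toeplitz

variable {R : Type*} [CommRing R]

theorem toeplitz_apply_eq_coeff_mul_X_pow (P : R[X]) (d t : ℕ) (i : Fin (d + t + 1))
    (j : Fin (t + 1)) : toeplitz P d t i j = (P * X ^ (j : ℕ)).coeff i :=
  (coeff_mul_X_pow' P j i).symm

variable [DecidableEq R]

theorem toeplitz_mulVec (P : R[X]) (d t : ℕ) (v : Fin (t + 1) → R)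
    (i : Fin (d + t + 1)) : (toeplitz P d t *ᵥ v) i = (P * ofFn (t + 1) v).coeff i := by
  rw [mulVec, dotProduct, ofFn_eq_sum_monomial, mul_sum, finsetSum_coeff]
  refine sum_congr rfl fun j _ => ?_
  rw [toeplitz_apply_eq_coeff_mul_X_pow, ← C_mul_X_pow_eq_monomial, mul_left_comm, coeff_C_mul,
    mul_comm]

theorem card_filter_toeplitz_mulVec_eq_zero {P : R[X]} {d : ℕ}
    (hPd : P.natDegree ≤ d) (t : ℕ) (v : Fin (t + 1) → R) :
    #{i | (toeplitz P d t *ᵥ v) i = 0} = d + t + 1 - #(P * ofFn (t + 1) v).support := by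
  simp only [toeplitz_mulVec]
  exact card_filter_coeff_eq_zero (natDegree_mul_ofFn_lt hPd t v)

end Toeplitz

theorem min_weight_eq_sub_max_satisfied
    (P : Polynomial (ZMod 2)) (d t : ℕ) (hP : P ≠ 0) (hPd : P.natDegree = d) :
    sInf {w : ℕ | ∃ K : Polynomial (ZMod 2), K ≠ 0 ∧ P ∣ K ∧
        K.natDegree < d + t + 1 ∧ K.support.card = w} =
      (d + t + 1) -
        sSup {s : ℕ | ∃ q : Fin (t + 1) → ZMod 2, q ≠ 0 ∧
          (Finset.univ.filter fun i : Fin (d + t + 1) =>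
            (toeplitz P d t).mulVec q i = 0).card = s} := by
  subst hPd
  set weight : (Fin (t + 1) → ZMod 2) → ℕ := fun v => #(P * ofFn (t + 1) v).support
  have hweights : {w : ℕ | ∃ K : Polynomial (ZMod 2), K ≠ 0 ∧ P ∣ K ∧
      K.natDegree < P.natDegree + t + 1 ∧ K.support.card = w} = weight '' {v | v ≠ 0} := by
    rw [← Set.image_image (fun K : (ZMod 2)[X] => #K.support), image_mul_ofFn hP]
    ext
    simp only [Set.mem_ofPred_eq, Set.mem_image, and_assoc]
  have hsatisfied : {s : ℕ | ∃ q : Fin (t + 1) → ZMod 2, q ≠ 0 ∧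
      (Finset.univ.filter fun i : Fin (P.natDegree + t + 1) =>
        (toeplitz P P.natDegree t).mulVec q i = 0).card = s} =
      (P.natDegree + t + 1 - ·) '' (weight '' {v | v ≠ 0}) := by
    simp only [Set.image_image, card_filter_toeplitz_mulVec_eq_zero le_rfl, weight]
    rfl
  rw [hweights, hsatisfied]
  refine Nat.sInf_eq_sub_sSup_image_sub (Set.Nonempty.image weight (exists_ne 0)) ?_
  rintro _ ⟨v, -, rfl⟩
  exact (card_le_card (supp_subset_range (natDegree_mul_ofFn_lt le_rfl t v))).trans_eq
    (card_range _)
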